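/- arXiv:1509.03790 — 2 statements merged into one kernel-verified Lean document; each statement's English description precedes it below -/
import Mathlib

section
/- If k > -2 and (x,y,z) ∈ ℝ³ satisfies κ(x,y,z) = k, then 2z + xy ≠ 0. -/
theorem kappaPhi_two_z_add_xy_ne_zero (x y z k : ℝ) (hk : k > -2)
    (h : -x ^ 2 - y ^ 2 + z ^ 2 + x * y * z - 2 = k) :
    2 * z + x * y ≠ 0 := by
  intro h0
  nlinarith [sq_nonneg x, sq_nonneg y, sq_nonneg (x*y), sq_nonneg (x^2 - y^2)]
end

section
/- Let x, y, z, x', y' be real numbers with x + x' = -yz and y + y' = -zx (edge relations at a vertex of an imaginary character), and suppose |x| ≥ |x'| and |y| ≥ |y'| (both edges point away, i.e. the vertex is a fork or source). Then |z| ≤ 2 or x = y = 0. -/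
theorem fork_lemma_imaginary (x y z x' y' : ℝ)
    (hx' : x + x' = -(y * z)) (hy' : y + y' = -(z * x))
    (hxx : |x| ≥ |x'|) (hyy : |y| ≥ |y'|) :
    |z| ≤ 2 ∨ (x = 0 ∧ y = 0) := by
  have h1 : |y| * |z| ≤ 2 * |x| := by
    calc |y| * |z| = |y * z| := (abs_mul y z).symm
    _ = |x + x'| := by rw [hx', abs_neg]
    _ ≤ |x| + |x'| := abs_add_le _ _
    _ ≤ 2 * |x| := by linarith
  have h2 : |x| * |z| ≤ 2 * |y| := by
    calc |x| * |z| = |z * x| := by rw [abs_mul, mul_comm]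
    _ = |y + y'| := by rw [hy', abs_neg]
    _ ≤ |y| + |y'| := abs_add_le _ _
    _ ≤ 2 * |y| := by linarith
  rcases eq_or_lt_of_le (by positivity : (0:ℝ) ≤ |x| + |y|) with h | h
  · right
    constructor <;>
      · rw [← abs_eq_zero]
        nlinarith [abs_nonneg x, abs_nonneg y]
  · left
    nlinarith [abs_nonneg z]
end
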